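/- arXiv:2208.06463 — 5 statements merged into one kernel-verified Lean document; each statement's English description precedes it below -/
import Mathlib

section
/- Suppose x lies in the T-period-n part of f × g × w and w^T(x, n) ≤ 1. Then for every r ∈ ℕ, the ratio R_{nq+r}(x) = S_f^{nq+r}(x) / S_g^{nq+r}(x) converges to R_n(x) = S_f^n(x)/S_g^n(x) as q → ∞. -/
/-! Periodicity makes the weighted sums affine in the number of periods: with `c = w^T(x, n)`,
`S_h^{nq+r}(x) = (1 + c + ⋯ + c^{q-1}) S_h^n(x) + c^q S_h^r(x)`. Since `0 < c ≤ 1`, the geometric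
sum is at least `q c^q`, so the second term is negligible relative to the first and the ratio
tends to `S_f^n(x) / S_g^n(x)`. -/

open Finset Filter

noncomputable def cocycle {X : Type*} (T : X → X) (w : X → ℝ) (x : X) (k : ℕ) : ℝ :=
  ∏ j ∈ Finset.range k, w (T^[j] x)

noncomputable def wSum {X : Type*} (T : X → X) (w : X → ℝ) (h : X → ℝ) (n : ℕ) (x : X) : ℝ :=
  ∑ k ∈ Finset.range n, h (T^[k] x) * cocycle T w x k

noncomputable def ratio {X : Type*} (T : X → X) (w f g : X → ℝ) (n : ℕ) (x : X) : ℝ :=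
  wSum T w f n x / wSum T w g n x

def InPeriodPart {X Y : Type*} (T : X → X) (h : X → Y) (n : ℕ) (x : X) : Prop :=
  ∀ k : ℕ, h (T^[k] x) = h (T^[n] (T^[k] x))

theorem InPeriodPart.comp {X Y Z : Type*} {T : X → X} {h : X → Y} {n : ℕ} {x : X}
    (hx : InPeriodPart T h n x) (φ : Y → Z) : InPeriodPart T (φ ∘ h) n x :=
  fun k => congrArg φ (hx k)

theorem InPeriodPart.apply_iterate {X Y : Type*} {T : X → X} {h : X → Y} {n : ℕ} {x : X}
    (hx : InPeriodPart T h n x) (k : ℕ) : h (T^[k] (T^[n] x)) = h (T^[k] x) := by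
  rw [← Function.iterate_add_apply, add_comm, Function.iterate_add_apply]
  exact (hx k).symm

section WeightedSums

variable {X : Type*} {T : X → X} {w : X → ℝ}

theorem cocycle_pos (hw : ∀ x, 0 < w x) (x : X) (k : ℕ) : 0 < cocycle T w x k :=
  prod_pos fun _ _ => hw _

theorem wSum_pos {h : X → ℝ} (hh : ∀ x, 0 < h x) (hw : ∀ x, 0 < w x) {n : ℕ} (hn : 1 ≤ n)
    (x : X) : 0 < wSum T w h n x :=
  sum_pos (fun _ _ => mul_pos (hh _) (cocycle_pos hw _ _)) (nonempty_range_iff.mpr (by omega))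

theorem cocycle_add (x : X) (m k : ℕ) :
    cocycle T w x (m + k) = cocycle T w x m * cocycle T w (T^[m] x) k := by
  rw [cocycle, cocycle, cocycle, prod_range_add]
  exact congrArg _ (prod_congr rfl fun j _ => by rw [add_comm, Function.iterate_add_apply])

theorem wSum_add (h : X → ℝ) (x : X) (m k : ℕ) :
    wSum T w h (m + k) x = wSum T w h m x + cocycle T w x m * wSum T w h k (T^[m] x) := by
  rw [wSum, wSum, wSum, sum_range_add, mul_sum]
  refine congrArg _ (sum_congr rfl fun j _ => ?_)
  rw [cocycle_add, add_comm, Function.iterate_add_apply]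
  ring

theorem cocycle_iterate_of_inPeriodPart {n : ℕ} {x : X} (hx : InPeriodPart T w n x) (k : ℕ) :
    cocycle T w (T^[n] x) k = cocycle T w x k :=
  prod_congr rfl fun j _ => hx.apply_iterate j

theorem wSum_iterate_of_inPeriodPart {h : X → ℝ} {n : ℕ} {x : X}
    (hx : InPeriodPart T (fun y => (h y, w y)) n x) (k : ℕ) :
    wSum T w h k (T^[n] x) = wSum T w h k x := by
  have hperh : InPeriodPart T h n x := hx.comp Prod.fst
  have hperw : InPeriodPart T w n x := hx.comp Prod.snd
  exact sum_congr rfl fun j _ => by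
    rw [hperh.apply_iterate j, cocycle_iterate_of_inPeriodPart hperw j]

theorem wSum_mul_add_of_inPeriodPart {h : X → ℝ} {n : ℕ} {x : X}
    (hx : InPeriodPart T (fun y => (h y, w y)) n x) (q r : ℕ) :
    wSum T w h (n * q + r) x = (∑ j ∈ range q, cocycle T w x n ^ j) * wSum T w h n x +
      cocycle T w x n ^ q * wSum T w h r x := by
  induction q with
  | zero => simp
  | succ q ih =>
    rw [show n * (q + 1) + r = n + (n * q + r) by ring, wSum_add,
      wSum_iterate_of_inPeriodPart hx, ih, geom_sum_succ]
    ring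

end WeightedSums

theorem tendsto_pow_div_geom_sum_of_le_one {c : ℝ} (hc₀ : 0 ≤ c) (hc₁ : c ≤ 1) :
    Tendsto (fun q : ℕ => c ^ q / ∑ j ∈ range q, c ^ j) atTop (nhds 0) := by
  refine squeeze_zero' (Eventually.of_forall fun q => by positivity) ?_
    tendsto_one_div_atTop_nhds_zero_nat
  filter_upwards [eventually_ge_atTop 1] with q hq
  have hq' : (0 : ℝ) < q := by exact_mod_cast hq
  have hsum : (q : ℝ) * c ^ q ≤ ∑ j ∈ range q, c ^ j := by
    simpa using card_nsmul_le_sum (range q) (c ^ ·) (c ^ q)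
      fun j hj => pow_le_pow_of_le_one hc₀ hc₁ (mem_range.mp hj).le
  rw [div_le_div_iff₀ (geom_sum_pos hc₀ (by omega)) hq']
  linarith

theorem tendsto_div_add_mul_of_tendsto_div {α : Type*} {l : Filter α} {s u : α → ℝ}
    {A B a b : ℝ} (hB : B ≠ 0) (hs : ∀ᶠ q in l, s q ≠ 0)
    (hu : Tendsto (fun q => u q / s q) l (nhds 0)) :
    Tendsto (fun q => (s q * A + u q * a) / (s q * B + u q * b)) l (nhds (A / B)) := by
  have hlim : Tendsto (fun q => (A + u q / s q * a) / (B + u q / s q * b)) l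
      (nhds ((A + 0 * a) / (B + 0 * b))) :=
    (tendsto_const_nhds.add (hu.mul_const a)).div (tendsto_const_nhds.add (hu.mul_const b))
      (by simpa using hB)
  simp only [zero_mul, add_zero] at hlim
  refine hlim.congr' ?_
  filter_upwards [hs] with q hq
  rw [← mul_div_mul_left _ _ hq]
  congr 1 <;> field_simp

theorem ratio_tendsto_of_cocycle_le_one {X : Type*} (T : X → X) (f g w : X → ℝ)
    (hg : ∀ x, 0 < g x) (hw : ∀ x, 0 < w x) (n : ℕ) (hn : 1 ≤ n) (x : X)
    (hx : InPeriodPart T (fun y => (f y, g y, w y)) n x)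
    (hcoc : cocycle T w x n ≤ 1) :
    ∀ r : ℕ,
      Tendsto (fun q : ℕ => ratio T w f g (n * q + r) x) atTop
        (nhds (ratio T w f g n x)) := by
  intro r
  have hc₀ := (cocycle_pos (T := T) hw x n).le
  simp only [ratio, wSum_mul_add_of_inPeriodPart (hx.comp fun p => (p.1, p.2.2)),
    wSum_mul_add_of_inPeriodPart (hx.comp Prod.snd)]
  exact tendsto_div_add_mul_of_tendsto_div (wSum_pos hg hw hn x).ne'
    ((eventually_ge_atTop 1).mono fun q hq => (geom_sum_pos hc₀ (by omega)).ne')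
    (tendsto_pow_div_geom_sum_of_le_one hc₀ hcoc)
end

section
/- Suppose X is a Borel space and T : X → X is a separable aperiodic Borel transformation. Then there is a vanishing sequence (B_i) of T-complete Borel subsets of X, i.e., a decreasing sequence with empty intersection such that for every i, every point of X reaches B_i under some iterate of T. -/
def SeparatesRel {X : Type*} [MeasurableSpace X] (R : X → X → Prop) : Prop :=
  ∃ B : ℕ → Set X, (∀ i, MeasurableSet (B i)) ∧
    ∀ x y, x ≠ y → R x y → ∃ i, x ∈ B i ∧ y ∉ B i

namespace MarkerAux

attribute [local instance] Classical.propDecidable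

variable {X : Type*} (T : X → X) (A : ℕ → Set X)

/-- The orbit of `x` matches the pattern `s` (on coordinates `< n`) cofinally often. -/
def Pn (x : X) (n : ℕ) (s : ℕ → Bool) : Prop :=
  ∀ m : ℕ, ∃ k, m ≤ k ∧ ∀ j, j < n → (T^[k] x ∈ A j ↔ s j = true)

noncomputable def F (x : X) : ℕ → ℕ → Bool
  | 0 => fun _ => false
  | n + 1 =>
      Function.update (F x n) n
        (if Pn T A x (n + 1) (Function.update (F x n) n false) then false else true)

noncomputable def b (x : X) (j : ℕ) : Bool := F T A x (j + 1) j

lemma Pn_congr {x : X} {n : ℕ} {s t : ℕ → Bool} (h : ∀ j, j < n → s j = t j) :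
    Pn T A x n s → Pn T A x n t := by
  intro hp m
  obtain ⟨k, hk, hm⟩ := hp m
  exact ⟨k, hk, fun j hj => by rw [← h j hj]; exact hm j hj⟩

lemma Pn_congr_iff {x : X} {n : ℕ} {s t : ℕ → Bool} (h : ∀ j, j < n → s j = t j) :
    Pn T A x n s ↔ Pn T A x n t :=
  ⟨Pn_congr T A h, Pn_congr T A fun j hj => (h j hj).symm⟩

lemma Pn_zero (x : X) (s : ℕ → Bool) : Pn T A x 0 s :=
  fun m => ⟨m, le_refl m, fun j hj => absurd hj (Nat.not_lt_zero j)⟩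

lemma match_update {x : X} {n k : ℕ} {s : ℕ → Bool} {v : Bool}
    (h : ∀ j, j < n → (T^[k] x ∈ A j ↔ s j = true))
    (hv : T^[k] x ∈ A n ↔ v = true) :
    ∀ j, j < n + 1 → (T^[k] x ∈ A j ↔ Function.update s n v j = true) := by
  intro j hj
  rcases Nat.lt_succ_iff_lt_or_eq.mp hj with hj' | rfl
  · rw [Function.update_of_ne hj'.ne]; exact h j hj'
  · rw [Function.update_self]; exact hv

lemma Pn_split {x : X} {n : ℕ} {s : ℕ → Bool} (h : Pn T A x n s) :
    Pn T A x (n + 1) (Function.update s n false) ∨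
      Pn T A x (n + 1) (Function.update s n true) := by
  by_contra hc
  push_neg at hc
  obtain ⟨h0, h1⟩ := hc
  unfold Pn at h0 h1
  push_neg at h0 h1
  obtain ⟨m0, hm0⟩ := h0
  obtain ⟨m1, hm1⟩ := h1
  obtain ⟨k, hk, hmatch⟩ := h (max m0 m1)
  by_cases hA : T^[k] x ∈ A n
  · obtain ⟨j, hj, hbad⟩ := hm1 k (le_trans (le_max_right m0 m1) hk)
    have hiff := match_update T A hmatch (show T^[k] x ∈ A n ↔ true = true by simp [hA]) j hj
    rcases hbad with ⟨ha, hb⟩ | ⟨ha, hb⟩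
    · exact hb (hiff.mp ha)
    · exact ha (hiff.mpr hb)
  · obtain ⟨j, hj, hbad⟩ := hm0 k (le_trans (le_max_left m0 m1) hk)
    have hiff := match_update T A hmatch (show T^[k] x ∈ A n ↔ false = true by simp [hA]) j hj
    rcases hbad with ⟨ha, hb⟩ | ⟨ha, hb⟩
    · exact hb (hiff.mp ha)
    · exact ha (hiff.mpr hb)

lemma F_succ_lt {x : X} {n j : ℕ} (h : j < n) : F T A x (n + 1) j = F T A x n j := by
  simp only [F]
  exact Function.update_of_ne h.ne _ _

lemma F_succ_self (x : X) (n : ℕ) :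
    F T A x (n + 1) n =
      (if Pn T A x (n + 1) (Function.update (F T A x n) n false) then false else true) := by
  simp only [F]
  exact Function.update_self _ _ _

lemma F_eq_b {x : X} {n j : ℕ} (h : j < n) : F T A x n j = b T A x j := by
  induction n with
  | zero => omega
  | succ n ih =>
    rcases Nat.lt_succ_iff_lt_or_eq.mp h with h' | rfl
    · rw [F_succ_lt T A h']; exact ih h'
    · rfl

lemma Pn_F (x : X) : ∀ n, Pn T A x n (F T A x n) := by
  intro n
  induction n with
  | zero => exact Pn_zero T A x _
  | succ n ih =>
    by_cases h : Pn T A x (n + 1) (Function.update (F T A x n) n false)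
    · have : F T A x (n + 1) = Function.update (F T A x n) n false := by
        simp only [F, if_pos h]
      rw [this]; exact h
    · have hF : F T A x (n + 1) = Function.update (F T A x n) n true := by
        simp only [F, if_neg h]
      rcases Pn_split T A ih with h' | h'
      · exact absurd h' h
      · rw [hF]; exact h'

lemma Pn_shift (x : X) (n : ℕ) (s : ℕ → Bool) :
    Pn T A (T x) n s ↔ Pn T A x n s := by
  constructor
  · intro h m
    obtain ⟨k, hk, hm⟩ := h m
    refine ⟨k + 1, le_trans hk (Nat.le_succ k), fun j hj => ?_⟩
    rw [Function.iterate_succ_apply]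
    exact hm j hj
  · intro h m
    obtain ⟨k, hk, hm⟩ := h (m + 1)
    obtain ⟨k', rfl⟩ : ∃ k', k = k' + 1 := ⟨k - 1, by omega⟩
    refine ⟨k', by omega, fun j hj => ?_⟩
    rw [← Function.iterate_succ_apply]
    exact hm j hj

lemma F_shift (x : X) : ∀ n, F T A (T x) n = F T A x n := by
  intro n
  induction n with
  | zero => rfl
  | succ n ih =>
    simp only [F, ih]
    rw [Pn_shift]

lemma b_shift (x : X) : b T A (T x) = b T A x :=
  funext fun j => by unfold b; rw [F_shift]

lemma b_iter (x : X) : ∀ k, b T A (T^[k] x) = b T A x := by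
  intro k
  induction k generalizing x with
  | zero => rfl
  | succ k ih =>
    rw [Function.iterate_succ_apply, ih (T x), b_shift]

lemma exists_orbit (hsep' : ∀ n, 1 ≤ n → ∀ x : X, ∃ j, x ∈ A j ∧ T^[n] x ∉ A j)
    (x : X) (i : ℕ) :
    ∃ k, (∀ j, j < i → (T^[k] x ∈ A j ↔ b T A x j = true)) ∧
      ∃ j, ¬(T^[k] x ∈ A j ↔ b T A x j = true) := by
  have hP : Pn T A x i (b T A x) :=
    Pn_congr T A (fun j hj => F_eq_b T A hj) (Pn_F T A x i)
  obtain ⟨k₁, -, h₁⟩ := hP 0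
  obtain ⟨k₂, hk₂, h₂⟩ := hP (k₁ + 1)
  by_contra hc
  push_neg at hc
  have e₁ := hc k₁ h₁
  have e₂ := hc k₂ h₂
  obtain ⟨j, hin, hnotin⟩ := hsep' (k₂ - k₁) (by omega) (T^[k₁] x)
  have hiter : T^[k₂ - k₁] (T^[k₁] x) = T^[k₂] x := by
    rw [← Function.iterate_add_apply]
    congr 1
    omega
  rw [hiter] at hnotin
  exact hnotin ((e₂ j).mpr ((e₁ j).mp hin))

section Meas

variable [MeasurableSpace X]

lemma meas_match (hT : Measurable T) (hA : ∀ j, MeasurableSet (A j)) (k n : ℕ) (s : ℕ → Bool) :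
    MeasurableSet {x : X | ∀ j, j < n → (T^[k] x ∈ A j ↔ s j = true)} := by
  have heq : {x : X | ∀ j, j < n → (T^[k] x ∈ A j ↔ s j = true)} =
      ⋂ (j : ℕ) (_ : j < n), T^[k] ⁻¹' (if s j = true then A j else (A j)ᶜ) := by
    ext x
    simp only [Set.mem_setOf_eq, Set.mem_iInter, Set.mem_preimage]
    refine forall_congr' fun j => forall_congr' fun hj => ?_
    by_cases hs : s j = true
    · simp [hs]
    · simp [hs]
  rw [heq]
  refine MeasurableSet.iInter fun j => MeasurableSet.iInter fun hj => ?_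
  refine Measurable.iterate hT k ?_
  by_cases hs : s j = true
  · rw [if_pos hs]; exact hA j
  · rw [if_neg hs]; exact (hA j).compl

lemma meas_Pn (hT : Measurable T) (hA : ∀ j, MeasurableSet (A j)) (n : ℕ) (s : ℕ → Bool) : MeasurableSet {x : X | Pn T A x n s} := by
  have heq : {x : X | Pn T A x n s} =
      ⋂ (m : ℕ), ⋃ (k : ℕ) (_ : m ≤ k),
        {x : X | ∀ j, j < n → (T^[k] x ∈ A j ↔ s j = true)} := by
    ext x
    simp [Pn]
  rw [heq]
  exact MeasurableSet.iInter fun m => MeasurableSet.iUnion fun k =>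
    MeasurableSet.iUnion fun _ => meas_match T A hT hA k n s

lemma meas_prefix (hT : Measurable T) (hA : ∀ j, MeasurableSet (A j)) : ∀ (n : ℕ) (s : ℕ → Bool),
    MeasurableSet {x : X | ∀ j, j < n → F T A x n j = s j} := by
  intro n
  induction n with
  | zero =>
    intro s
    have : {x : X | ∀ j, j < 0 → F T A x 0 j = s j} = Set.univ := by
      ext x; simp
    rw [this]; exact MeasurableSet.univ
  | succ n ih =>
    intro s
    have key : ∀ x : X, (∀ j, j < n → F T A x n j = s j) →
        (Pn T A x (n + 1) (Function.update (F T A x n) n false) ↔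
          Pn T A x (n + 1) (Function.update s n false)) := by
      intro x hpre
      refine Pn_congr_iff T A fun j hj => ?_
      rcases Nat.lt_succ_iff_lt_or_eq.mp hj with hj' | rfl
      · rw [Function.update_of_ne hj'.ne, Function.update_of_ne hj'.ne]
        exact hpre j hj'
      · rw [Function.update_self, Function.update_self]
    have heq : {x : X | ∀ j, j < n + 1 → F T A x (n + 1) j = s j} =
        {x : X | ∀ j, j < n → F T A x n j = s j} ∩
          (if s n = true then {x : X | Pn T A x (n + 1) (Function.update s n false)}ᶜ
           else {x : X | Pn T A x (n + 1) (Function.update s n false)}) := by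
      ext x
      simp only [Set.mem_setOf_eq, Set.mem_inter_iff]
      constructor
      · intro h
        have hpre : ∀ j, j < n → F T A x n j = s j := by
          intro j hj
          rw [← F_succ_lt T A hj]
          exact h j (by omega)
        refine ⟨hpre, ?_⟩
        have hn := h n (by omega)
        rw [F_succ_self] at hn
        by_cases hp : Pn T A x (n + 1) (Function.update (F T A x n) n false)
        · rw [if_pos hp] at hn
          have hs : s n = false := hn.symm
          rw [hs]
          simp only [Bool.false_eq_true, if_neg (by simp : ¬(false = true))]
          exact (key x hpre).mp hp
        · rw [if_neg hp] at hn
          have hs : s n = true := hn.symm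
          rw [hs, if_pos rfl]
          intro hcon
          exact hp ((key x hpre).mpr hcon)
      · rintro ⟨hpre, hcond⟩
        intro j hj
        rcases Nat.lt_succ_iff_lt_or_eq.mp hj with hj' | rfl
        · rw [F_succ_lt T A hj']; exact hpre j hj'
        · rw [F_succ_self]
          by_cases hs : s j = true
          · rw [if_pos hs] at hcond
            rw [if_neg (fun hp => hcond ((key x hpre).mp hp)), hs]
          · rw [if_neg hs] at hcond
            have : s j = false := by cases hsj : s j <;> simp_all
            rw [if_pos ((key x hpre).mpr hcond), this]
    rw [heq]
    refine (ih s).inter ?_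
    by_cases hs : s n = true
    · rw [if_pos hs]; exact (meas_Pn T A hT hA _ _).compl
    · rw [if_neg hs]; exact meas_Pn T A hT hA _ _

lemma meas_b (hT : Measurable T) (hA : ∀ j, MeasurableSet (A j)) (j : ℕ) (v : Bool) : MeasurableSet {x : X | b T A x j = v} := by
  classical
  have heq : {x : X | b T A x j = v} =
      ⋃ (σ : Fin (j + 1) → Bool) (_ : σ ⟨j, Nat.lt_succ_self j⟩ = v),
        {x : X | ∀ j', j' < j + 1 →
          F T A x (j + 1) j' = (fun m => if h : m < j + 1 then σ ⟨m, h⟩ else false) j'} := by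
    ext x
    simp only [Set.mem_setOf_eq, Set.mem_iUnion]
    constructor
    · intro h
      refine ⟨fun m => F T A x (j + 1) m.1, h, fun j' hj' => ?_⟩
      simp [hj']
    · rintro ⟨σ, hσ, hmem⟩
      have := hmem j (Nat.lt_succ_self j)
      simp only [dif_pos (Nat.lt_succ_self j)] at this
      unfold b
      rw [this, hσ]
  rw [heq]
  exact MeasurableSet.iUnion fun σ => MeasurableSet.iUnion fun _ =>
    meas_prefix T A hT hA (j + 1) _

lemma meas_iff (hT : Measurable T) (hA : ∀ j, MeasurableSet (A j)) (j : ℕ) : MeasurableSet {x : X | x ∈ A j ↔ b T A x j = true} := by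
  have heq : {x : X | x ∈ A j ↔ b T A x j = true} =
      (A j ∩ {x : X | b T A x j = true}) ∪ ((A j)ᶜ ∩ {x : X | b T A x j = false}) := by
    ext x
    simp only [Set.mem_setOf_eq, Set.mem_union, Set.mem_inter_iff, Set.mem_compl_iff]
    cases hb : b T A x j <;> by_cases hx : x ∈ A j <;> simp [hx, hb]
  rw [heq]
  exact ((hA j).inter (meas_b T A hT hA j true)).union
    ((hA j).compl.inter (meas_b T A hT hA j false))

end Meas

end MarkerAux

theorem marker_lemma_complete {X : Type*} [MeasurableSpace X] (T : X → X)
    (hT : Measurable T)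
    (haper : ∀ n : ℕ, 1 ≤ n → ∀ x : X, T^[n] x ≠ x)
    (hsep : ∀ n : ℕ, 1 ≤ n → SeparatesRel (fun (x y : X) => y = T^[n] x)) :
    ∃ B : ℕ → Set X, (∀ i, MeasurableSet (B i)) ∧
      (∀ i, B (i + 1) ⊆ B i) ∧ (⋂ i, B i) = ∅ ∧
      ∀ i, ∀ x : X, ∃ n : ℕ, T^[n] x ∈ B i := by
  classical
  have hfam : ∀ n : ℕ, ∃ Bf : ℕ → Set X, (∀ i, MeasurableSet (Bf i)) ∧
      (1 ≤ n → ∀ x : X, ∃ i, x ∈ Bf i ∧ T^[n] x ∉ Bf i) := by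
    intro n
    by_cases hn : 1 ≤ n
    · obtain ⟨Bf, hBm, hBs⟩ := hsep n hn
      exact ⟨Bf, hBm, fun _ x => hBs x (T^[n] x) (Ne.symm (haper n hn x)) rfl⟩
    · exact ⟨fun _ => ∅, fun _ => MeasurableSet.empty, fun h => absurd h hn⟩
  choose G hGm hGs using hfam
  set A : ℕ → Set X := fun j => G ((Nat.unpair j).1 + 1) ((Nat.unpair j).2) with hAdef
  have hAm : ∀ j, MeasurableSet (A j) := fun j => hGm _ _
  have hAs : ∀ n, 1 ≤ n → ∀ x : X, ∃ j, x ∈ A j ∧ T^[n] x ∉ A j := by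
    intro n hn x
    obtain ⟨i, h1, h2⟩ := hGs n hn x
    have hpair : n - 1 + 1 = n := by omega
    refine ⟨Nat.pair (n - 1) i, ?_, ?_⟩ <;>
      · simp only [hAdef, Nat.unpair_pair, hpair]
        assumption
  refine ⟨fun i => {x | (∀ j, j < i → (x ∈ A j ↔ MarkerAux.b T A x j = true)) ∧
      ∃ j, ¬(x ∈ A j ↔ MarkerAux.b T A x j = true)}, ?_, ?_, ?_, ?_⟩
  · intro i
    show MeasurableSet {x : X | (∀ j, j < i → (x ∈ A j ↔ MarkerAux.b T A x j = true)) ∧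
      ∃ j, ¬(x ∈ A j ↔ MarkerAux.b T A x j = true)}
    have heq : {x : X | (∀ j, j < i → (x ∈ A j ↔ MarkerAux.b T A x j = true)) ∧
        ∃ j, ¬(x ∈ A j ↔ MarkerAux.b T A x j = true)} =
        (⋂ (j : ℕ) (_ : j < i), {x : X | x ∈ A j ↔ MarkerAux.b T A x j = true}) ∩
        (⋃ (j : ℕ), {x : X | x ∈ A j ↔ MarkerAux.b T A x j = true}ᶜ) := by
      ext x
      simp [Set.mem_iInter, Set.mem_iUnion]
    rw [heq]
    exact (MeasurableSet.iInter fun j => MeasurableSet.iInter fun _ =>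
        MarkerAux.meas_iff T A hT hAm j).inter
      (MeasurableSet.iUnion fun j => (MarkerAux.meas_iff T A hT hAm j).compl)
  · intro i x hx
    exact ⟨fun j hj => hx.1 j (by omega), hx.2⟩
  · rw [Set.eq_empty_iff_forall_notMem]
    intro x hx
    simp only [Set.mem_iInter, Set.mem_setOf_eq] at hx
    obtain ⟨j₀, hj₀⟩ := (hx 0).2
    exact hj₀ ((hx (j₀ + 1)).1 j₀ (Nat.lt_succ_self j₀))
  · intro i x
    obtain ⟨k, h1, h2⟩ := MarkerAux.exists_orbit T A hAs x i
    refine ⟨k, ?_, ?_⟩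
    · intro j hj
      rw [MarkerAux.b_iter T A x k]
      exact h1 j hj
    · obtain ⟨j, hj⟩ := h2
      exact ⟨j, by rw [MarkerAux.b_iter T A x k]; exact hj⟩
end

section
/- Suppose X is a Borel space, T : X → X is Borel, and there exists a vanishing sequence of T-complete Borel subsets of X. Then there exists a vanishing sequence (B_i) of T-bounded Borel subsets of X, i.e., decreasing with empty intersection such that for each i there is n with X = ∪_{m≤n} T^{-m}(B_i). -/
theorem bounded_markers_of_complete_markers {X : Type*} [MeasurableSpace X]
    (T : X → X) (hT : Measurable T)
    (h : ∃ A : ℕ → Set X, (∀ i, MeasurableSet (A i)) ∧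
      (∀ i, A (i + 1) ⊆ A i) ∧ (⋂ i, A i) = ∅ ∧
      ∀ i, ∀ x : X, ∃ n : ℕ, T^[n] x ∈ A i) :
    ∃ B : ℕ → Set X, (∀ i, MeasurableSet (B i)) ∧
      (∀ i, B (i + 1) ⊆ B i) ∧ (⋂ i, B i) = ∅ ∧
      ∀ i, ∃ n : ℕ, ∀ x : X, ∃ m ≤ n, T^[m] x ∈ B i := by
  obtain ⟨A, hA1, hA2, hA3, hA4⟩ := h
  have hAnti : Antitone A := antitone_nat_of_succ_le hA2
  set B : ℕ → Set X := fun i =>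
    ⋂ j, ⋂ (_ : j ≤ i), (A j ∪ ⋂ m, ⋂ (_ : m ≤ i), (T^[m] ⁻¹' A j)ᶜ) with hB
  have hBmem : ∀ i x, x ∈ B i ↔ ∀ j ≤ i, x ∈ A j ∨ ∀ m ≤ i, T^[m] x ∉ A j := by
    intro i x
    simp [hB]
  refine ⟨B, ?_, ?_, ?_, ?_⟩
  · intro i
    refine MeasurableSet.iInter fun j => MeasurableSet.iInter fun _ => (hA1 j).union ?_
    exact MeasurableSet.iInter fun m => MeasurableSet.iInter fun _ =>
      ((hT.iterate m) (hA1 j)).compl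
  · intro i x hx
    rw [hBmem] at hx ⊢
    intro j hj
    rcases hx j (by omega) with h1 | h2
    · exact Or.inl h1
    · exact Or.inr fun m hm => h2 m (by omega)
  · rw [Set.eq_empty_iff_forall_notMem]
    intro x hx
    have hx' : x ∉ ⋂ i, A i := by rw [hA3]; exact Set.notMem_empty x
    rw [Set.mem_iInter] at hx
    obtain ⟨j0, hj0⟩ : ∃ j0, x ∉ A j0 := by
      by_contra hcon
      push_neg at hcon
      exact hx' (Set.mem_iInter.mpr hcon)
    obtain ⟨n, hn⟩ := hA4 j0 x
    have := (hBmem (max j0 n) x).mp (hx _) j0 (le_max_left _ _)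
    rcases this with h1 | h2
    · exact hj0 h1
    · exact h2 n (le_max_right _ _) hn
  · intro i
    -- key induction: within (i+1)*(j+1) steps we reach a point good for all levels ≤ j
    have key : ∀ j x, ∃ m, m ≤ (i + 1) * (j + 1) ∧
        ∀ j' ≤ j, (T^[m] x ∈ A j' ∨ ∀ k ≤ i, T^[k + m] x ∉ A j') := by
      intro j
      induction j with
      | zero =>
        intro x
        by_cases hc : ∃ k ≤ i, T^[k] x ∈ A 0
        · obtain ⟨k, hk, hmem⟩ := hc
          refine ⟨k, by omega, fun j' hj' => ?_⟩
          have : j' = 0 := Nat.le_zero.mp hj'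
          subst this
          exact Or.inl hmem
        · push_neg at hc
          refine ⟨0, by omega, fun j' hj' => ?_⟩
          have : j' = 0 := Nat.le_zero.mp hj'
          subst this
          exact Or.inr fun k hk => by simpa using hc k hk
      | succ j ih =>
        intro x
        by_cases hc : ∃ h' ≤ (i + 1) * (j + 2), T^[h'] x ∈ A (j + 1)
        · obtain ⟨h', hh', hmem⟩ := hc
          exact ⟨h', hh', fun j' hj' => Or.inl (hAnti hj' hmem)⟩
        · push_neg at hc
          obtain ⟨m, hm, hgood⟩ := ih x
          have harith : (i + 1) * (j + 2) = (i + 1) * (j + 1) + (i + 1) := by ring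
          have harith2 : (i + 1) * (j + 1 + 1) = (i + 1) * (j + 2) := by ring
          refine ⟨m, by omega, fun j' hj' => ?_⟩
          rcases Nat.lt_or_ge j' (j + 1) with hlt | hge
          · exact hgood j' (by omega)
          · have : j' = j + 1 := by omega
            subst this
            exact Or.inr fun k hk => hc (k + m) (by omega)
    refine ⟨(i + 1) * (i + 1), fun x => ?_⟩
    obtain ⟨m, hm, hgood⟩ := key i x
    refine ⟨m, hm, (hBmem i _).mpr fun j hj => ?_⟩
    rcases hgood j hj with h1 | h2
    · exact Or.inl h1
    · refine Or.inr fun k hk => ?_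
      rw [← Function.iterate_add_apply]
      exact h2 k hk
end

section
/- Suppose S_g^n(x) → ∞ as n → ∞ for all x ∈ X. Then the set of limit points of the sequence (R_n(x))_{n∈ℕ} is T-invariant: for every x, the limit-point set of (R_n(x)) equals the limit-point set of (R_n(Tx)). In particular, limsup_n R_n(Tx) = limsup_n R_n(x). -/
/-!
Peeling off the first term of the weighted sums gives
`R_{n+1}(x) = f x / S_g^{n+1}(x) + (1 - g x / S_g^{n+1}(x)) * R_n(T x)`.
Since `S_g^{n+1}(x) → ∞`, the shifted sequence `R_{n+1}(x)` is an affine image of `R_n(T x)` with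
offset tending to `0` and slope tending to `1`, and so is its inverse. Such a map preserves cluster
points, and turns an eventual upper bound `a` into an eventual upper bound `b` for every `b > a`,
which pins down the `limsup`; shifting the index changes neither.
-/

open Finset Filter Topology

/-- Holds also when `sInf` takes its junk value `0` (empty or unbounded sets), which is what makes
it apply to `limsup` of real sequences that are not bounded. -/
theorem Real.sInf_eq_sInf_of_forall_lt_mem {S T : Set ℝ}
    (hST : ∀ a ∈ S, ∀ b, a < b → b ∈ T) (hTS : ∀ a ∈ T, ∀ b, a < b → b ∈ S) :
    sInf S = sInf T := by
  have lowerBounds_subset {S T : Set ℝ} (h : ∀ a ∈ T, ∀ b, a < b → b ∈ S) :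
      lowerBounds S ⊆ lowerBounds T := fun c hc b hb =>
    le_of_forall_gt_imp_ge_of_dense fun d hd => hc (h b hb d hd)
  have hlb : lowerBounds S = lowerBounds T :=
    (lowerBounds_subset hTS).antisymm (lowerBounds_subset hST)
  rcases S.eq_empty_or_nonempty with rfl | hS
  · obtain rfl : T = ∅ := T.eq_empty_of_forall_notMem fun a ha => hTS a ha (a + 1) (lt_add_one a)
    rfl
  have hT : T.Nonempty := let ⟨a, ha⟩ := hS; ⟨a + 1, hST a ha (a + 1) (lt_add_one a)⟩
  by_cases hbdd : BddBelow S
  · have hglb : IsGLB S (sInf T) := by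
      rw [IsGLB, hlb]
      exact isGLB_csInf hT (by rwa [BddBelow, ← hlb])
    exact hglb.csInf_eq hS
  · rw [Real.sInf_of_not_bddBelow hbdd, Real.sInf_of_not_bddBelow (by rwa [BddBelow, ← hlb])]

theorem Real.limsup_eq_limsup_of_forall_lt {ι : Type*} {l : Filter ι} {u v : ι → ℝ}
    (huv : ∀ a b, a < b → (∀ᶠ i in l, u i ≤ a) → ∀ᶠ i in l, v i ≤ b)
    (hvu : ∀ a b, a < b → (∀ᶠ i in l, v i ≤ a) → ∀ᶠ i in l, u i ≤ b) :
    limsup u l = limsup v l := by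
  rw [limsup_eq, limsup_eq]
  exact Real.sInf_eq_sInf_of_forall_lt_mem (fun a ha b hab => huv a b hab ha)
    fun a ha b hab => hvu a b hab ha

theorem mapClusterPt_nat_add_iff {α : Type*} [TopologicalSpace α] {a : α} (u : ℕ → α) (k : ℕ) :
    MapClusterPt a atTop (fun n => u (n + k)) ↔ MapClusterPt a atTop u := by
  rw [← Function.comp_def, mapClusterPt_comp, map_add_atTop_eq_nat]

def AsymptoticallyAffine {ι : Type*} (l : Filter ι) (u v : ι → ℝ) : Prop :=
  ∃ e c : ι → ℝ, Tendsto e l (𝓝 0) ∧ Tendsto c l (𝓝 1) ∧ ∀ᶠ i in l, v i = e i + c i * u i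

namespace AsymptoticallyAffine

variable {ι : Type*} {l : Filter ι} {u v : ι → ℝ}

theorem symm (h : AsymptoticallyAffine l u v) : AsymptoticallyAffine l v u := by
  obtain ⟨e, c, he, hc, hrel⟩ := h
  refine ⟨fun i => -e i / c i, fun i => (c i)⁻¹, ?_, by simpa using hc.inv₀ one_ne_zero, ?_⟩
  · have hlim := he.neg.div hc one_ne_zero
    rwa [neg_zero, zero_div] at hlim
  · filter_upwards [hrel, hc.eventually_ne one_ne_zero] with i hv hc0
    rw [hv]
    field_simp
    ring

theorem mapClusterPt (h : AsymptoticallyAffine l u v) {a : ℝ} (hu : MapClusterPt a l u) :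
    MapClusterPt a l v := by
  obtain ⟨e, c, he, hc, hrel⟩ := h
  obtain ⟨U, hUl, huU⟩ := mapClusterPt_iff_ultrafilter.1 hu
  have hlim : Tendsto (fun i => e i + c i * u i) U (𝓝 (0 + 1 * a)) :=
    (he.mono_left hUl).add ((hc.mono_left hUl).mul huU)
  rw [zero_add, one_mul] at hlim
  exact mapClusterPt_iff_ultrafilter.2
    ⟨U, hUl, hlim.congr' (EventuallyEq.symm (hUl hrel))⟩

theorem mapClusterPt_iff (h : AsymptoticallyAffine l u v) (a : ℝ) :
    MapClusterPt a l v ↔ MapClusterPt a l u :=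
  ⟨h.symm.mapClusterPt, h.mapClusterPt⟩

theorem eventually_le (h : AsymptoticallyAffine l u v) {a b : ℝ} (hab : a < b)
    (hu : ∀ᶠ i in l, u i ≤ a) : ∀ᶠ i in l, v i ≤ b := by
  obtain ⟨e, c, he, hc, hrel⟩ := h
  have hlim : Tendsto (fun i => e i + c i * a) l (𝓝 (0 + 1 * a)) :=
    he.add (hc.mul tendsto_const_nhds)
  rw [zero_add, one_mul] at hlim
  filter_upwards [hrel, hu, hlim.eventually_lt_const hab, hc.eventually_const_lt one_pos]
    with i hv hui hlt hc0
  calc v i = e i + c i * u i := hv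
    _ ≤ e i + c i * a := by gcongr
    _ ≤ b := hlt.le

theorem limsup_eq (h : AsymptoticallyAffine l u v) : limsup v l = limsup u l :=
  Real.limsup_eq_limsup_of_forall_lt (fun _ _ hab => h.symm.eventually_le hab)
    fun _ _ hab => h.eventually_le hab

end AsymptoticallyAffine

section WeightedSums

variable {X : Type*} (T : X → X) (w : X → ℝ)

theorem cocycle_succ (x : X) (k : ℕ) : cocycle T w x (k + 1) = w x * cocycle T w (T x) k := by
  simp only [cocycle, prod_range_succ', Function.iterate_succ_apply, Function.iterate_zero_apply]
  ring

theorem wSum_succ (h : X → ℝ) (n : ℕ) (x : X) :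
    wSum T w h (n + 1) x = h x + w x * wSum T w h n (T x) := by
  rw [wSum, wSum, sum_range_succ', add_comm, mul_sum]
  congr 1
  · simp [cocycle]
  · exact sum_congr rfl fun k _ => by rw [cocycle_succ, Function.iterate_succ_apply]; ring

theorem ratio_succ_asymptoticallyAffine (f g : X → ℝ) (x : X)
    (hx : Tendsto (fun n => wSum T w g n x) atTop atTop)
    (hTx : Tendsto (fun n => wSum T w g n (T x)) atTop atTop) :
    AsymptoticallyAffine atTop (fun n => ratio T w f g n (T x))
      (fun n => ratio T w f g (n + 1) x) := by
  have hx' := hx.comp (tendsto_add_atTop_nat 1)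
  refine ⟨fun n => f x / wSum T w g (n + 1) x, fun n => 1 - g x / wSum T w g (n + 1) x,
    tendsto_const_nhds.div_atTop hx', ?_, ?_⟩
  · simpa using tendsto_const_nhds.sub ((tendsto_const_nhds (x := g x)).div_atTop hx')
  · filter_upwards [hx'.eventually_ne_atTop 0, hTx.eventually_ne_atTop 0] with n hD hB
    simp only [Function.comp_apply, ratio, wSum_succ] at hD ⊢
    field_simp
    ring

end WeightedSums

theorem limitPoints_T_invariant_general {X : Type*} (T : X → X) (f g w : X → ℝ)
    (hdiv : ∀ x, Tendsto (fun n : ℕ => wSum T w g n x) atTop atTop) :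
    ∀ x : X,
      {a : ℝ | MapClusterPt a atTop (fun n : ℕ => ratio T w f g n (T x))} =
        {a : ℝ | MapClusterPt a atTop (fun n : ℕ => ratio T w f g n x)} ∧
      limsup (fun n : ℕ => ratio T w f g n (T x)) atTop =
        limsup (fun n : ℕ => ratio T w f g n x) atTop := by
  intro x
  have h := ratio_succ_asymptoticallyAffine T w f g x (hdiv x) (hdiv (T x))
  refine ⟨Set.ext fun a => ?_, ?_⟩
  · exact (h.mapClusterPt_iff a).symm.trans (mapClusterPt_nat_add_iff (ratio T w f g · x) 1)
  · rw [← h.limsup_eq, limsup_nat_add (ratio T w f g · x) 1]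

theorem limitPoints_T_invariant {X : Type*} (T : X → X) (f g w : X → ℝ)
    (hg : ∀ x, 0 < g x) (hw : ∀ x, 0 < w x)
    (hdiv : ∀ x, Tendsto (fun n : ℕ => wSum T w g n x) atTop atTop) :
    ∀ x : X,
      {a : ℝ | MapClusterPt a atTop (fun n : ℕ => ratio T w f g n (T x))} =
        {a : ℝ | MapClusterPt a atTop (fun n : ℕ => ratio T w f g n x)} ∧
      limsup (fun n : ℕ => ratio T w f g n (T x)) atTop =
        limsup (fun n : ℕ => ratio T w f g n x) atTop :=
  limitPoints_T_invariant_general T f g w hdiv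
end

section
/- Suppose C ⊆ X is a forward T-invariant and T-complete Borel set, and μ is a T-conservative Borel measure. Then C is μ-conull. -/
open MeasureTheory

/-- `W` is `T`-wandering: it meets each forward orbit in at most one point. -/
def IsWandering {X : Type*} (T : X → X) (W : Set X) : Prop :=
  ∀ x : X, (W ∩ Set.range fun k : ℕ => T^[k] x).Subsingleton

def IsConservative {X : Type*} [MeasurableSpace X] (T : X → X)
    (μ : Measure X) : Prop :=
  ∀ W : Set X, MeasurableSet W → IsWandering T W → μ W = 0

/-! Every point outside `C` lies in some `T^[n+1] ⁻¹' C \ T^[n] ⁻¹' C`: step `n + 1` is when its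
orbit enters `C`. As `C` is forward invariant, an orbit stays in `C` once it has entered it, so two
points `T^[j] x`, `T^[k] x` of this set have `n + 1 + j` and `n + 1 + k` as the entry time of `x`,
forcing `j = k`. Each of these sets is thus wandering, hence null. -/

namespace Set.MapsTo

variable {X : Type*} {T : X → X} {C : Set X}

theorem iterate_mem_of_le (hinv : MapsTo T C C) (x : X) {n m : ℕ} (hnm : n ≤ m)
    (hn : T^[n] x ∈ C) : T^[m] x ∈ C := by
  obtain ⟨k, rfl⟩ := Nat.exists_eq_add_of_le hnm
  rw [add_comm, Function.iterate_add_apply]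
  exact hinv.iterate k hn

theorem isWandering_preimage_iterate_succ_diff (hinv : MapsTo T C C) (n : ℕ) :
    IsWandering T (T^[n + 1] ⁻¹' C \ T^[n] ⁻¹' C) := by
  rintro x _ ⟨⟨hj, hj'⟩, j, rfl⟩ _ ⟨⟨hk, hk'⟩, k, rfl⟩
  simp only [Set.mem_preimage, ← Function.iterate_add_apply] at hj hj' hk hk'
  have entry_le {a b : ℕ} (ha : T^[n + 1 + a] x ∈ C) (hb : T^[n + b] x ∉ C) : b ≤ a := by
    by_contra!
    exact hb (hinv.iterate_mem_of_le x (by omega) ha)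
  rw [le_antisymm (entry_le hk hj') (entry_le hj hk')]

end Set.MapsTo

theorem compl_subset_iUnion_preimage_iterate_succ_diff {X : Type*} {T : X → X} {C : Set X}
    (hcomp : ∀ x : X, ∃ n : ℕ, T^[n] x ∈ C) :
    Cᶜ ⊆ ⋃ n : ℕ, T^[n + 1] ⁻¹' C \ T^[n] ⁻¹' C := by
  classical
  intro x hx
  have hm : T^[Nat.find (hcomp x)] x ∈ C := Nat.find_spec (hcomp x)
  have hm₀ : Nat.find (hcomp x) ≠ 0 := fun h => hx (by rwa [h] at hm)
  refine Set.mem_iUnion.2 ⟨Nat.find (hcomp x) - 1, ?_, Nat.find_min (hcomp x) (by omega)⟩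
  rwa [Set.mem_preimage, Nat.sub_add_cancel (Nat.pos_of_ne_zero hm₀)]

theorem conull_of_invariant_complete {X : Type*} [MeasurableSpace X]
    (T : X → X) (hT : Measurable T) (μ : Measure X)
    (hcons : IsConservative T μ)
    (C : Set X) (hC : MeasurableSet C) (hinv : T '' C ⊆ C)
    (hcomp : ∀ x : X, ∃ n : ℕ, T^[n] x ∈ C) :
    μ Cᶜ = 0 := by
  have hmaps : Set.MapsTo T C C := Set.mapsTo_iff_image_subset.2 hinv
  refine measure_mono_null (compl_subset_iUnion_preimage_iterate_succ_diff hcomp) ?_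
  refine measure_iUnion_null fun n => hcons _ ?_ (hmaps.isWandering_preimage_iterate_succ_diff n)
  exact (hT.iterate (n + 1) hC).diff (hT.iterate n hC)
end
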